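/- arXiv:2602.04383 — 2 statements merged into one kernel-verified Lean document; each statement's English description precedes it below -/
import Mathlib

section
/- Let Z be a standard Gaussian random variable and define φ(l) = E[log cosh(√(2l)·Z)] for l ≥ 0. Then φ(l) = l − l² + o(l²) as l → 0⁺; precisely, (φ(l) − l + l²)/l² tends to 0 as l tends to 0 from the right. -/
/-!
On `[0, ∞)`, bounds for `tanh` propagate to bounds for its antiderivative `log cosh` by comparing
derivatives, which gives `0 ≤ log cosh y - (y² / 2 - y⁴ / 12) ≤ y⁶ / 45` for all real `y` (both
sides are even). Gaussian integration by parts gives `E[Z²] = 1`, `E[Z⁴] = 3`, `E[Z⁶] = 15`, so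
with `y = c Z` and `c² = 2 l` one gets `0 ≤ φ l - l + l² ≤ 8 l³ / 3`.
-/

open Real Filter MeasureTheory ProbabilityTheory Topology
open scoped NNReal Nat

theorem le_of_hasDerivAt_le {f g f' g' : ℝ → ℝ} {a x : ℝ} (hf : ∀ y, HasDerivAt f (f' y) y)
    (hg : ∀ y, HasDerivAt g (g' y) y) (ha : f a ≤ g a) (hderiv : ∀ y, a ≤ y → f' y ≤ g' y)
    (hx : a ≤ x) : f x ≤ g x := by
  have hmono : MonotoneOn (g - f) (Set.Ici a) := by
    refine monotoneOn_of_hasDerivWithinAt_nonneg (convex_Ici a)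
      (fun y _ ↦ ((hg y).sub (hf y)).continuousAt.continuousWithinAt)
      (fun y _ ↦ ((hg y).sub (hf y)).hasDerivWithinAt) fun y hy ↦ ?_
    rw [interior_Ici] at hy
    exact sub_nonneg.2 (hderiv y hy.le)
  have := hmono Set.self_mem_Ici hx hx
  simp only [Pi.sub_apply] at this
  linarith

namespace Real

theorem hasDerivAt_tanh (x : ℝ) : HasDerivAt tanh (1 - tanh x ^ 2) x := by
  rw [show tanh = fun y ↦ sinh y / cosh y from funext tanh_eq_sinh_div_cosh]
  refine ((hasDerivAt_sinh x).fun_div (hasDerivAt_cosh x) (cosh_pos x).ne').congr_deriv ?_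
  field_simp

theorem hasDerivAt_log_cosh (x : ℝ) : HasDerivAt (fun y ↦ log (cosh y)) (tanh x) x := by
  simpa [← tanh_eq_sinh_div_cosh] using (hasDerivAt_cosh x).log (cosh_pos x).ne'

theorem tanh_nonneg {x : ℝ} (hx : 0 ≤ x) : 0 ≤ tanh x :=
  le_of_hasDerivAt_le (fun _ ↦ hasDerivAt_const _ 0) hasDerivAt_tanh (by simp)
    (fun y _ ↦ sub_nonneg.2 (tanh_sq_lt_one y).le) hx

theorem tanh_le_self {x : ℝ} (hx : 0 ≤ x) : tanh x ≤ x :=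
  le_of_hasDerivAt_le hasDerivAt_tanh hasDerivAt_id' (by simp)
    (fun y _ ↦ sub_le_self _ (sq_nonneg _)) hx

theorem sub_cube_div_three_le_tanh {x : ℝ} (hx : 0 ≤ x) : x - x ^ 3 / 3 ≤ tanh x := by
  refine le_of_hasDerivAt_le (f := fun y ↦ y - y ^ 3 / 3) (f' := fun y ↦ 1 - y ^ 2)
    (fun y ↦ ((hasDerivAt_id' y).fun_sub ((hasDerivAt_pow 3 y).div_const 3)).congr_deriv
      (by ring))
    hasDerivAt_tanh (by simp) (fun y hy ↦ ?_) hx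
  have := tanh_nonneg hy
  have := tanh_le_self hy
  nlinarith

theorem tanh_le_sub_cube_div_three_add {x : ℝ} (hx : 0 ≤ x) :
    tanh x ≤ x - x ^ 3 / 3 + 2 * x ^ 5 / 15 := by
  refine le_of_hasDerivAt_le (g := fun y ↦ y - y ^ 3 / 3 + 2 * y ^ 5 / 15)
    (g' := fun y ↦ 1 - y ^ 2 + 2 * y ^ 4 / 3) hasDerivAt_tanh (fun y ↦ ?_) (by simp)
    (fun y hy ↦ ?_) hx
  · refine (((hasDerivAt_id' y).fun_sub ((hasDerivAt_pow 3 y).div_const 3)).fun_add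
      (((hasDerivAt_pow 5 y).const_mul 2).div_const 15)).congr_deriv ?_
    push_cast
    ring
  · -- The goal is `y² - 2 y⁴ / 3 ≤ tanh² y`: for `y² ≤ 3 / 2` square the cubic lower bound,
    -- otherwise the left side is negative.
    rcases le_or_gt (y ^ 2) (3 / 2) with hsmall | hlarge
    · have hcubic := sub_cube_div_three_le_tanh hy
      have hcubic_nonneg : 0 ≤ y - y ^ 3 / 3 := by nlinarith
      nlinarith [mul_le_mul hcubic hcubic hcubic_nonneg (hcubic_nonneg.trans hcubic),
        sq_nonneg (y ^ 3)]
    · nlinarith [sq_nonneg (tanh y)]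

theorem sq_div_two_sub_pow_four_div_twelve_le_log_cosh_of_nonneg {x : ℝ} (hx : 0 ≤ x) :
    x ^ 2 / 2 - x ^ 4 / 12 ≤ log (cosh x) :=
  le_of_hasDerivAt_le (f := fun y ↦ y ^ 2 / 2 - y ^ 4 / 12) (f' := fun y ↦ y - y ^ 3 / 3)
    (fun y ↦ (((hasDerivAt_pow 2 y).div_const 2).fun_sub
      ((hasDerivAt_pow 4 y).div_const 12)).congr_deriv (by push_cast; ring))
    hasDerivAt_log_cosh (by simp) (fun _ hy ↦ sub_cube_div_three_le_tanh hy) hx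

theorem log_cosh_le_sq_div_two_sub_pow_four_div_twelve_add_of_nonneg {x : ℝ} (hx : 0 ≤ x) :
    log (cosh x) ≤ x ^ 2 / 2 - x ^ 4 / 12 + x ^ 6 / 45 :=
  le_of_hasDerivAt_le (g := fun y ↦ y ^ 2 / 2 - y ^ 4 / 12 + y ^ 6 / 45)
    (g' := fun y ↦ y - y ^ 3 / 3 + 2 * y ^ 5 / 15) hasDerivAt_log_cosh
    (fun y ↦ ((((hasDerivAt_pow 2 y).div_const 2).fun_sub
      ((hasDerivAt_pow 4 y).div_const 12)).fun_add
      ((hasDerivAt_pow 6 y).div_const 45)).congr_deriv (by push_cast; ring))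
    (by simp) (fun _ hy ↦ tanh_le_sub_cube_div_three_add hy) hx

theorem sq_div_two_sub_pow_four_div_twelve_le_log_cosh (x : ℝ) :
    x ^ 2 / 2 - x ^ 4 / 12 ≤ log (cosh x) := by
  simpa [cosh_abs, (by decide : Even 4).pow_abs] using
    sq_div_two_sub_pow_four_div_twelve_le_log_cosh_of_nonneg (abs_nonneg x)

theorem log_cosh_le_sq_div_two_sub_pow_four_div_twelve_add (x : ℝ) :
    log (cosh x) ≤ x ^ 2 / 2 - x ^ 4 / 12 + x ^ 6 / 45 := by
  simpa [cosh_abs, (by decide : Even 4).pow_abs, (by decide : Even 6).pow_abs] using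
    log_cosh_le_sq_div_two_sub_pow_four_div_twelve_add_of_nonneg (abs_nonneg x)

end Real

theorem integral_pow_add_two_mul_exp_neg_mul_sq {b : ℝ} (hb : 0 < b) (n : ℕ) :
    2 * b * ∫ x, x ^ (n + 2) * exp (-b * x ^ 2) = (n + 1) * ∫ x, x ^ n * exp (-b * x ^ 2) := by
  have hint (k : ℕ) : Integrable fun x : ℝ ↦ x ^ k * exp (-b * x ^ 2) := by
    simpa [rpow_natCast] using
      integrable_rpow_mul_exp_neg_mul_sq hb (s := k) (by linarith [k.cast_nonneg (α := ℝ)])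
  have hlim : Tendsto (fun x : ℝ ↦ x ^ (n + 1) * exp (-b * x ^ 2)) (cocompact ℝ) (𝓝 0) := by
    refine squeeze_zero_norm (fun x ↦ le_of_eq ?_)
      (tendsto_rpow_abs_mul_exp_neg_mul_sq_cocompact hb (n + 1 : ℕ))
    simp only [norm_mul, norm_pow, norm_eq_abs, abs_exp, rpow_natCast]
  have hderiv (x : ℝ) : HasDerivAt (fun x ↦ x ^ (n + 1) * exp (-b * x ^ 2))
      ((n + 1) * (x ^ n * exp (-b * x ^ 2)) - 2 * b * (x ^ (n + 2) * exp (-b * x ^ 2))) x :=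
    ((hasDerivAt_pow (n + 1) x).fun_mul (((hasDerivAt_pow 2 x).const_mul (-b)).exp)).congr_deriv
      (by push_cast; ring)
  have hparts := integral_of_hasDerivAt_of_tendsto hderiv
    (((hint n).const_mul _).sub ((hint (n + 2)).const_mul _))
    (hlim.mono_left atBot_le_cocompact) (hlim.mono_left atTop_le_cocompact)
  rw [integral_sub ((hint n).const_mul _) ((hint (n + 2)).const_mul _), integral_const_mul,
    integral_const_mul] at hparts
  linarith

theorem integral_pow_add_two_gaussianReal (v : ℝ≥0) (n : ℕ) :
    ∫ x, x ^ (n + 2) ∂gaussianReal 0 v = (n + 1) * v * ∫ x, x ^ n ∂gaussianReal 0 v := by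
  rcases eq_or_ne v 0 with rfl | hv
  · simp [gaussianReal_zero_var]
  have hdensity (k : ℕ) : ∫ x, x ^ k ∂gaussianReal 0 v
      = (√(2 * π * v))⁻¹ * ∫ x, x ^ k * exp (-(2 * v : ℝ)⁻¹ * x ^ 2) := by
    rw [integral_gaussianReal_eq_integral_smul hv, ← integral_const_mul]
    congr 1 with x
    simp only [gaussianPDFReal, smul_eq_mul, sub_zero]
    ring_nf
  have hparts := integral_pow_add_two_mul_exp_neg_mul_sq (b := (2 * v : ℝ)⁻¹) (by positivity) n
  rw [hdensity, hdensity]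
  field_simp at hparts ⊢
  linear_combination hparts

theorem integrable_pow_gaussianReal (μ : ℝ) (v : ℝ≥0) (n : ℕ) :
    Integrable (fun x ↦ x ^ n) (gaussianReal μ v) :=
  ((memLp_id_gaussianReal' n (by simp)).integrable_norm_pow').mono' (by fun_prop)
    (ae_of_all _ fun x ↦ by simp)

-- For `k = 0` the truncated `2 * 0 - 1 = 0` is harmless: `0‼ = 1`.
theorem integral_pow_even_gaussianReal (v : ℝ≥0) (k : ℕ) :
    ∫ x, x ^ (2 * k) ∂gaussianReal 0 v = (2 * k - 1)‼ * (v : ℝ) ^ k := by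
  induction k with
  | zero => simp
  | succ k ih =>
    rw [show 2 * (k + 1) - 1 = 2 * k + 1 by omega, Nat.doubleFactorial_add_one, mul_add_one,
      integral_pow_add_two_gaussianReal, ih]
    push_cast
    ring

theorem integral_log_cosh_mul_gaussianReal_sub_mem_Icc (c : ℝ) :
    (∫ x, log (cosh (c * x)) ∂gaussianReal 0 1) - (c ^ 2 / 2 - c ^ 4 / 4)
      ∈ Set.Icc 0 (c ^ 6 / 3) := by
  have hmoment (k : ℕ) :
      ∫ x, (c * x) ^ (2 * k) ∂gaussianReal 0 1 = (2 * k - 1)‼ * c ^ (2 * k) := by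
    simp_rw [mul_pow, integral_const_mul, integral_pow_even_gaussianReal]
    simp [mul_comm]
  have h2 := hmoment 1
  have h4 := hmoment 2
  have h6 := hmoment 3
  norm_num [Nat.doubleFactorial] at h2 h4 h6
  have hpow (n : ℕ) : Integrable (fun x ↦ (c * x) ^ n) (gaussianReal 0 1) := by
    simpa only [mul_pow] using (integrable_pow_gaussianReal 0 1 n).const_mul (c ^ n)
  have hquartic : Integrable (fun x ↦ (c * x) ^ 2 / 2 - (c * x) ^ 4 / 12) (gaussianReal 0 1) :=
    ((hpow 2).div_const 2).sub ((hpow 4).div_const 12)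
  have hlogcosh : Integrable (fun x ↦ log (cosh (c * x))) (gaussianReal 0 1) :=
    integrable_of_le_of_le
      (by fun_prop : Measurable fun x ↦ log (cosh (c * x))).aestronglyMeasurable
      (ae_of_all _ fun x ↦ sq_div_two_sub_pow_four_div_twelve_le_log_cosh (c * x))
      (ae_of_all _ fun x ↦ log_cosh_le_sq_div_two_sub_pow_four_div_twelve_add (c * x))
      hquartic (hquartic.add ((hpow 6).div_const 45))
  have hremainder :
      ∫ x, (log (cosh (c * x)) - ((c * x) ^ 2 / 2 - (c * x) ^ 4 / 12)) ∂gaussianReal 0 1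
        = (∫ x, log (cosh (c * x)) ∂gaussianReal 0 1) - (c ^ 2 / 2 - c ^ 4 / 4) := by
    rw [integral_sub hlogcosh hquartic,
      integral_sub ((hpow 2).div_const 2) ((hpow 4).div_const 12), integral_div, integral_div,
      h2, h4]
    ring
  rw [← hremainder]
  constructor
  · exact integral_nonneg fun x ↦ sub_nonneg.2 (sq_div_two_sub_pow_four_div_twelve_le_log_cosh _)
  · calc _ ≤ ∫ x, (c * x) ^ 6 / 45 ∂gaussianReal 0 1 :=
          integral_mono (hlogcosh.sub hquartic) ((hpow 6).div_const 45) fun x ↦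
            sub_le_iff_le_add'.2 (log_cosh_le_sq_div_two_sub_pow_four_div_twelve_add (c * x))
      _ = c ^ 6 / 3 := by
          rw [integral_div, h6]
          ring

theorem integral_log_cosh_sqrt_mul_gaussianReal_sub_add_mem_Icc {l : ℝ} (hl : 0 ≤ l) :
    (∫ x, log (cosh (√(2 * l) * x)) ∂gaussianReal 0 1) - l + l ^ 2
      ∈ Set.Icc 0 (8 / 3 * l ^ 3) := by
  obtain ⟨hlower, hupper⟩ := integral_log_cosh_mul_gaussianReal_sub_mem_Icc √(2 * l)
  have hc2 : √(2 * l) ^ 2 = 2 * l := sq_sqrt (by positivity)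
  have hc4 : √(2 * l) ^ 4 = 4 * l ^ 2 := by
    rw [show √(2 * l) ^ 4 = (√(2 * l) ^ 2) ^ 2 by ring, hc2]
    ring
  have hc6 : √(2 * l) ^ 6 = 8 * l ^ 3 := by
    rw [show √(2 * l) ^ 6 = (√(2 * l) ^ 2) ^ 3 by ring, hc2]
    ring
  constructor <;> linarith

/-- Let `Z` be a standard Gaussian and `φ l = E[log cosh(√(2l) Z)]`. Then
`φ l = l - l² + o(l²)` as `l → 0⁺`: `(φ l - l + l²) / l² → 0` as `l → 0⁺`. -/
theorem stmt_2 :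
    Tendsto (fun l : ℝ =>
        ((∫ x, Real.log (Real.cosh (Real.sqrt (2 * l) * x)) ∂(gaussianReal 0 1))
          - l + l ^ 2) / l ^ 2)
      (nhdsWithin 0 (Set.Ioi 0)) (nhds 0) := by
  have hlin : Tendsto (fun l : ℝ ↦ 8 / 3 * l) (𝓝[>] 0) (𝓝 0) := by
    simpa using (tendsto_id.const_mul (8 / 3 : ℝ)).mono_left (nhdsWithin_le_nhds (a := (0 : ℝ)))
  refine squeeze_zero' ?_ ?_ hlin
  all_goals
    filter_upwards [self_mem_nhdsWithin] with l (hl : 0 < l)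
    have hbounds := integral_log_cosh_sqrt_mul_gaussianReal_sub_add_mem_Icc hl.le
  · exact div_nonneg hbounds.1 (by positivity)
  · rw [div_le_iff₀ (by positivity)]
    linarith [hbounds.2]
end

section
/- For every real t > 0 and every integer p ≥ 3, there exists C₀ > 0 such that for all C ≥ C₀: E[log cosh(√(2/C)·Z)] − 1/C + t·((p−1)/p)·(1/(C²·t))^(p/(p−1)) < 0, where Z is a standard Gaussian random variable. -/
/-!
The map `u ↦ log (cosh √u)` is concave on `[0, ∞)` (its derivative is `tanh √u / (2√u)`), so
Jensen's inequality and `E[Z²] = 1` give `E[log cosh (aZ)] ≤ log cosh a`. For `a = √(2/C)` small,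
comparing Taylor polynomials gives `log cosh a ≤ a²/2 - a⁴/20 = 1/C - 1/(5C²)`. Writing
`X = 1/(C²t)`, the conjugate term is `((p-1)/p) X^(1/(p-1)) / C²`, and `X^(1/(p-1)) → 0`, so it is
eventually smaller than `1/(5C²)`.
-/

open Real MeasureTheory ProbabilityTheory Filter Topology Set

lemma antitoneOn_tanh_div_self : AntitoneOn (fun y => tanh y / y) (Ioi 0) := by
  have hderiv : ∀ y ≠ 0, HasDerivAt (fun y => sinh y / (y * cosh y))
      ((y - sinh y * cosh y) / (y * cosh y) ^ 2) y := by
    intro y hy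
    have hne : y * cosh y ≠ 0 := mul_ne_zero hy (cosh_pos y).ne'
    refine ((hasDerivAt_sinh y).div ((hasDerivAt_id' y).mul (hasDerivAt_cosh y)) hne).congr_deriv ?_
    simp only [Pi.mul_apply]
    congr 1
    linear_combination y * cosh_sq_sub_sinh_sq y
  have heq : (fun y => tanh y / y) = fun y => sinh y / (y * cosh y) := by
    ext y; rw [tanh_eq_sinh_div_cosh, div_div, mul_comm]
  rw [heq]
  refine antitoneOn_of_deriv_nonpos (convex_Ioi 0)
    (fun y hy => (hderiv y (ne_of_gt hy)).continuousAt.continuousWithinAt) ?_ ?_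
  all_goals rw [interior_Ioi]
  · exact fun y hy => (hderiv y (ne_of_gt hy)).differentiableAt.differentiableWithinAt
  · intro y hy
    rw [(hderiv y (ne_of_gt hy)).deriv]
    have hy0 : (0 : ℝ) < y := hy
    have hy_le : y ≤ sinh y := (self_lt_sinh_iff.2 hy0).le
    have hsinh : sinh y ≤ sinh y * cosh y := le_mul_of_one_le_right (by linarith) (one_le_cosh y)
    exact div_nonpos_of_nonpos_of_nonneg (by linarith) (sq_nonneg _)

lemma concaveOn_log_cosh_sqrt : ConcaveOn ℝ (Ici 0) (fun u => log (cosh √u)) := by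
  have hderiv : ∀ u : ℝ, 0 < u → HasDerivAt (fun u => log (cosh √u)) (tanh √u / √u / 2) u := by
    intro u hu
    have hs : 0 < √u := sqrt_pos.2 hu
    convert ((hasDerivAt_sqrt hu.ne').cosh).log (cosh_pos _).ne' using 1
    rw [tanh_eq_sinh_div_cosh]
    field_simp
  refine AntitoneOn.concaveOn_of_deriv (convex_Ici 0)
    ((continuous_cosh.comp continuous_sqrt).log fun _ => (cosh_pos _).ne').continuousOn ?_ ?_
  all_goals rw [interior_Ici]
  · exact fun u hu => (hderiv u hu).differentiableAt.differentiableWithinAt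
  · intro u hu v hv huv
    rw [(hderiv u hu).deriv, (hderiv v hv).deriv]
    gcongr 1
    exact antitoneOn_tanh_div_self (sqrt_pos.2 hu) (sqrt_pos.2 hv) (sqrt_le_sqrt huv)

lemma integral_log_cosh_mul_le {μ : Measure ℝ} [IsProbabilityMeasure μ]
    (hint : Integrable (fun x => x ^ 2) μ) (hμ : ∫ x, x ^ 2 ∂μ = 1) (a : ℝ) :
    ∫ x, log (cosh (a * x)) ∂μ ≤ log (cosh a) := by
  have hsq : Integrable (fun x => (a * x) ^ 2) μ := by
    simpa only [mul_pow] using hint.const_mul (a ^ 2)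
  have hlog : Integrable (fun x => log (cosh (a * x))) μ := by
    refine (hsq.div_const 2).mono' (Measurable.log (by fun_prop)).aestronglyMeasurable
      (ae_of_all _ fun x => ?_)
    rw [norm_of_nonneg (log_nonneg (one_le_cosh _)), log_le_iff_le_exp (cosh_pos _)]
    exact cosh_le_exp_half_sq _
  have hjensen := concaveOn_log_cosh_sqrt.le_map_integral
    ((continuous_cosh.comp continuous_sqrt).log fun _ => (cosh_pos _).ne').continuousOn
    isClosed_Ici (ae_of_all _ fun x => sq_nonneg (a * x)) hsq
    (by simpa only [Function.comp_def, sqrt_sq_eq_abs, cosh_abs] using hlog)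
  simp only [sqrt_sq_eq_abs, cosh_abs] at hjensen
  simpa only [mul_pow, integral_const_mul, hμ, mul_one, sqrt_sq_eq_abs, cosh_abs] using hjensen

lemma cosh_le_one_add_sq_div_two_add_pow_four {a : ℝ} (ha : |a| ≤ 1) :
    cosh a ≤ 1 + a ^ 2 / 2 + 5 * a ^ 4 / 96 := by
  have hpos := exp_bound ha (by norm_num : 0 < 4)
  have hneg := exp_bound (x := -a) (by rwa [abs_neg]) (by norm_num : 0 < 4)
  simp only [Finset.sum_range_succ, Finset.sum_range_zero, abs_neg] at hpos hneg
  norm_num [Nat.factorial] at hpos hneg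
  rw [cosh_eq]
  have h4 : |a| ^ 4 = a ^ 4 := by rw [← abs_pow, abs_of_nonneg (by positivity)]
  rw [h4] at hpos hneg
  linarith [(abs_le.1 hpos).2, (abs_le.1 hneg).2]

lemma log_cosh_le {a : ℝ} (ha : |a| ≤ 1 / 2) : log (cosh a) ≤ a ^ 2 / 2 - a ^ 4 / 20 := by
  have ha2 : a ^ 2 ≤ 1 / 4 := by nlinarith [sq_abs a, abs_nonneg a]
  rw [log_le_iff_le_exp (cosh_pos a), sub_eq_add_neg, exp_add]
  calc cosh a ≤ (1 + a ^ 2 / 2 + (a ^ 2 / 2) ^ 2 / 2) * (1 - a ^ 4 / 20) := by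
        have := cosh_le_one_add_sq_div_two_add_pow_four (ha.trans (by norm_num))
        nlinarith [mul_nonneg (sq_nonneg (a ^ 2)) (sq_nonneg a)]
    _ ≤ exp (a ^ 2 / 2) * exp (-(a ^ 4 / 20)) := by
        gcongr
        · nlinarith
        · exact quadratic_le_exp_of_nonneg (by positivity)
        · linarith [add_one_le_exp (-(a ^ 4 / 20))]

lemma integral_sq_gaussianReal (v : NNReal) : ∫ x, x ^ 2 ∂gaussianReal 0 v = v := by
  rw [← variance_of_integral_eq_zero aemeasurable_id' integral_id_gaussianReal,
    variance_fun_id_gaussianReal]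

lemma integral_log_cosh_sqrt_two_div_mul_le {C : ℝ} (hC : 8 ≤ C) :
    ∫ x, log (cosh (√(2 / C) * x)) ∂gaussianReal 0 1 ≤ 1 / C - 1 / (5 * C ^ 2) := by
  have ha2 : √(2 / C) ^ 2 = 2 / C := sq_sqrt (by positivity)
  have hsmall : |√(2 / C)| ≤ 1 / 2 := by
    rw [abs_of_nonneg (sqrt_nonneg _)]
    refine (sqrt_le_left (by norm_num)).2 ?_
    rw [div_le_iff₀ (by positivity)]
    linarith
  calc ∫ x, log (cosh (√(2 / C) * x)) ∂gaussianReal 0 1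
      ≤ log (cosh √(2 / C)) :=
        integral_log_cosh_mul_le ((memLp_id_gaussianReal 2).integrable_sq)
          (by simpa using integral_sq_gaussianReal 1) _
    _ ≤ √(2 / C) ^ 2 / 2 - (√(2 / C) ^ 2) ^ 2 / 20 := by
        simpa only [← pow_mul] using log_cosh_le hsmall
    _ = 1 / C - 1 / (5 * C ^ 2) := by
        rw [ha2]
        field_simp
        ring

lemma mul_rpow_conjExponent_le {t C p : ℝ} (ht : 0 < t) (hC : C ≠ 0) (hp : 1 < p) :
    t * ((p - 1) / p) * (1 / (C ^ 2 * t)) ^ (p / (p - 1))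
      ≤ (1 / (C ^ 2 * t)) ^ (1 / (p - 1)) / C ^ 2 := by
  set X := 1 / (C ^ 2 * t)
  have hX : 0 < X := by positivity
  have hsplit : X ^ (p / (p - 1)) = X * X ^ (1 / (p - 1)) := by
    have hp' : p - 1 ≠ 0 := by linarith
    rw [← rpow_one_add' hX.le (by positivity)]
    congr 1
    field_simp
    ring
  have htX : t * X = 1 / C ^ 2 := by
    simp only [X]
    field_simp
  calc t * ((p - 1) / p) * X ^ (p / (p - 1))
      = (p - 1) / p * (X ^ (1 / (p - 1)) / C ^ 2) := by
        rw [hsplit]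
        linear_combination (p - 1) / p * X ^ (1 / (p - 1)) * htX
    _ ≤ X ^ (1 / (p - 1)) / C ^ 2 := by
        refine mul_le_of_le_one_left (by positivity) ?_
        rw [div_le_one (by linarith)]
        linarith

/-- For every `t > 0` and integer `p ≥ 3`, there exists `C₀ > 0` such that for all `C ≥ C₀`,
`E[log cosh(√(2/C) Z)] - 1/C + t * ((p-1)/p) * (1/(C²t))^(p/(p-1)) < 0`,
where `Z` is a standard Gaussian random variable. -/
theorem stmt_4 (t : ℝ) (ht : 0 < t) (p : ℕ) (hp : 3 ≤ p) :
    ∃ C₀ > (0 : ℝ), ∀ C ≥ C₀,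
      (∫ x, Real.log (Real.cosh (Real.sqrt (2 / C) * x)) ∂(gaussianReal 0 1))
        - 1 / C
        + t * (((p : ℝ) - 1) / p) * (1 / (C ^ 2 * t)) ^ ((p : ℝ) / ((p : ℝ) - 1)) < 0 := by
  have hp1 : (1 : ℝ) < p := by exact_mod_cast (by omega : 1 < p)
  have hlim : Tendsto (fun C : ℝ => (1 / (C ^ 2 * t)) ^ (1 / ((p : ℝ) - 1))) atTop (𝓝 0) := by
    have h := (tendsto_const_nhds (x := (1 : ℝ))).div_atTop
      ((tendsto_pow_atTop two_ne_zero).atTop_mul_const ht)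
    have hexp : 0 < 1 / ((p : ℝ) - 1) := one_div_pos.2 (sub_pos.2 hp1)
    simpa only [zero_rpow hexp.ne'] using h.rpow_const (Or.inr hexp.le)
  obtain ⟨C₁, hC₁⟩ := eventually_atTop.1
    ((hlim.eventually (gt_mem_nhds (by norm_num : (0 : ℝ) < 1 / 5))).and (eventually_ge_atTop 8))
  refine ⟨max C₁ 8, by positivity, fun C hC => ?_⟩
  obtain ⟨hX, hC8⟩ := hC₁ C (le_of_max_le_left hC)
  have hC0 : 0 < C := by linarith
  calc _ ≤ (1 / C - 1 / (5 * C ^ 2)) - 1 / C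
          + (1 / (C ^ 2 * t)) ^ (1 / ((p : ℝ) - 1)) / C ^ 2 := by
        gcongr
        · exact integral_log_cosh_sqrt_two_div_mul_le hC8
        · exact mul_rpow_conjExponent_le ht hC0.ne' hp1
    _ = ((1 / (C ^ 2 * t)) ^ (1 / ((p : ℝ) - 1)) - 1 / 5) / C ^ 2 := by
        field_simp
        ring
    _ < 0 := div_neg_of_neg_of_pos (by linarith) (by positivity)
end
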